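/- arXiv:2302.01082 — 2 statements merged into one kernel-verified Lean document; each statement's English description precedes it below -/
import Mathlib

section
/- Given distributors α : A ⇸ B and β : B' ⇸ C between groupoids, and an adjoint equivalence L : B ≃ B' with right adjoint R, unit η and counit ε, there is a natural isomorphism β[L] • α ≅ β • [R]α, where β[L](b,c) = β(L b, c) and ([R]α)(a,b') = α(a, R b'); explicitly it sends t • s to t • α(a, η_b)(s), with inverse sending t' • s' to β(ε_{b'}, c)(t') • s'. -/
open CategoryTheory

/-- A distributor from `A` to `B`: a functor `Aᵒᵖ × B ⥤ Set`, presented as a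
family of sets of witnesses with compatible left (contravariant) and right
(covariant) actions. -/
structure Distr (A B : Type) [Category.{0} A] [Category.{0} B] where
  obj : A → B → Type
  actL : ∀ {a' a : A} {b : B}, (a' ⟶ a) → obj a b → obj a' b
  actR : ∀ {a : A} {b b' : B}, (b ⟶ b') → obj a b → obj a b'
  actL_id : ∀ {a b} (s : obj a b), actL (𝟙 a) s = s
  actR_id : ∀ {a b} (s : obj a b), actR (𝟙 b) s = s
  actL_comp : ∀ {a'' a' a b} (f : a'' ⟶ a') (g : a' ⟶ a) (s : obj a b),
    actL (f ≫ g) s = actL f (actL g s)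
  actR_comp : ∀ {a b b' b''} (f : b ⟶ b') (g : b' ⟶ b'') (s : obj a b),
    actR (f ≫ g) s = actR g (actR f s)
  actLR : ∀ {a' a b b'} (f : a' ⟶ a) (g : b ⟶ b') (s : obj a b),
    actL f (actR g s) = actR g (actL f s)

/-- The coend composition of distributors: pairs `(x, y)` over a middle object
`b`, quotiented by `(g·x, y) ∼ (x, y·g)`. -/
def DComp {A B C : Type} [Category.{0} A] [Category.{0} B] [Category.{0} C]
    (α : Distr A B) (β : Distr B C) (a : A) (c : C) : Type :=
  Quot (fun (p q : Σ b : B, α.obj a b × β.obj b c) =>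
    ∃ g : p.1 ⟶ q.1, q.2.1 = α.actR g p.2.1 ∧ p.2.2 = β.actL g q.2.2)

/-- Restriction of a distributor along a functor in its first (contravariant)
coordinate: `β[L](b,c) = β(L b, c)`. -/
def restrL {B B' C : Type} [Category.{0} B] [Category.{0} B'] [Category.{0} C]
    (β : Distr B' C) (L : B ⥤ B') : Distr B C where
  obj b c := β.obj (L.obj b) c
  actL f := β.actL (L.map f)
  actR := β.actR
  actL_id := by intros; simp [β.actL_id]
  actR_id := by intros; simp [β.actR_id]
  actL_comp := by intros; simp [β.actL_comp]
  actR_comp := by intros; simp [β.actR_comp]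
  actLR := by intros; simp [β.actLR]

/-- Restriction of a distributor along a functor in its second (covariant)
coordinate: `[R]α(a,b') = α(a, R b')`. -/
def restrR {A B B' : Type} [Category.{0} A] [Category.{0} B] [Category.{0} B']
    (α : Distr A B) (R : B' ⥤ B) : Distr A B' where
  obj a b' := α.obj a (R.obj b')
  actL := α.actL
  actR g := α.actR (R.map g)
  actL_id := by intros; simp [α.actL_id]
  actR_id := by intros; simp [α.actR_id]
  actL_comp := by intros; simp [α.actL_comp]
  actR_comp := by intros; simp [α.actR_comp]
  actLR := by intros; simp [α.actLR]

/-- Given distributors `α : A ⇸ B` and `β : B' ⇸ C` between groupoids and an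
adjoint equivalence `E : B ≌ B'` (with `L = E.functor`, `R = E.inverse`, unit
`η` and counit `ε`), there is an isomorphism `β[L] • α ≅ β • [R]α` sending
`t • s` to `t • α(a, η_b)(s)`, with inverse sending `t' • s'` to
`β(ε_{b'}, c)(t') • s'`. -/
theorem restr_adjoint_equivalence (A B B' C : Type) [Groupoid.{0} A]
    [Groupoid.{0} B] [Groupoid.{0} B'] [Groupoid.{0} C]
    (α : Distr A B) (β : Distr B' C) (E : B ≌ B') :
    ∃ e : ∀ (a : A) (c : C),
        DComp α (restrL β E.functor) a c ≃ DComp (restrR α E.inverse) β a c,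
      (∀ (a : A) (c : C) (b : B) (s : α.obj a b)
          (t : β.obj (E.functor.obj b) c),
        e a c (Quot.mk _ ⟨b, s, t⟩) =
          Quot.mk _ ⟨E.functor.obj b, α.actR (E.unit.app b) s, t⟩) ∧
      (∀ (a : A) (c : C) (b' : B') (s' : α.obj a (E.inverse.obj b'))
          (t' : β.obj b' c),
        (e a c).symm (Quot.mk _ ⟨b', s', t'⟩) =
          Quot.mk _ ⟨E.inverse.obj b', s', β.actL (E.counit.app b') t'⟩) := by

  classical
  refine ⟨fun a c => Equiv.mk
    (Quot.lift
      (fun p => Quot.mk _ ⟨E.functor.obj p.1,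
        α.actR (E.unit.app p.1) p.2.1, p.2.2⟩)
      ?_)
    (Quot.lift
      (fun p => Quot.mk _ ⟨E.inverse.obj p.1, p.2.1,
        β.actL (E.counit.app p.1) p.2.2⟩)
      ?_)
    ?_ ?_, ?_, ?_⟩
  · rintro ⟨b₁, s₁, t₁⟩ ⟨b₂, s₂, t₂⟩ ⟨g, hs, ht⟩
    apply Quot.sound
    refine ⟨E.functor.map g, ?_, ?_⟩
    · show α.actR (E.unit.app b₂) s₂
        = α.actR (E.inverse.map (E.functor.map g)) (α.actR (E.unit.app b₁) s₁)
      dsimp only at hs ht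
      rw [hs, ← α.actR_comp, ← α.actR_comp]
      congr 1
      simpa using E.unit.naturality g
    · exact ht
  · rintro ⟨b₁, s₁, t₁⟩ ⟨b₂, s₂, t₂⟩ ⟨g, hs, ht⟩
    apply Quot.sound
    refine ⟨E.inverse.map g, hs, ?_⟩
    show β.actL (E.counit.app b₁) t₁
      = β.actL (E.functor.map (E.inverse.map g)) (β.actL (E.counit.app b₂) t₂)
    dsimp only at hs ht
    rw [ht, ← β.actL_comp, ← β.actL_comp]
    congr 1
    simpa using (E.counit.naturality g).symm
  · intro x
    induction x using Quot.ind with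
    | _ p =>
      obtain ⟨b, s, t⟩ := p
      apply Eq.symm
      apply Quot.sound
      refine ⟨E.unit.app b, rfl, ?_⟩
      show t = β.actL (E.functor.map (E.unit.app b))
        (β.actL (E.counit.app (E.functor.obj b)) t)
      erw [← β.actL_comp, E.functor_unit_comp]
      exact (β.actL_id t).symm
  · intro x
    induction x using Quot.ind with
    | _ p =>
      obtain ⟨b', s', t'⟩ := p
      apply Quot.sound
      refine ⟨E.counit.app b', ?_, rfl⟩
      show s' = α.actR (E.inverse.map (E.counit.app b'))
        (α.actR (E.unit.app (E.inverse.obj b')) s')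
      erw [← α.actR_comp, E.unit_inverse_comp]
      exact (α.actR_id s').symm
  · intro a c b s t; rfl
  · intro a c b' s' t'; rfl
end

section
/- In a thin concurrent game, the polarized factorization of symmetries is unique: if θ : x ≅_A z is a symmetry, and θ = θ⁺ ∘ θ⁻ = φ⁺ ∘ φ⁻ are two factorizations with θ⁻, φ⁻ negative and θ⁺, φ⁺ positive, then θ⁻ = φ⁻ and θ⁺ = φ⁺ (given the existence of such a factorization and the axiom that a symmetry both positive and negative is an identity). -/
open CategoryTheory

theorem Groupoid.inv_comp_eq_comp_inv_of_comp_eq {C : Type*} [Groupoid C] {x y y' z : C}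
    {f : x ⟶ y} {g : y ⟶ z} {f' : x ⟶ y'} {g' : y' ⟶ z} (h : f ≫ g = f' ≫ g') :
    Groupoid.inv f ≫ f' = g ≫ Groupoid.inv g' := by
  rw [Groupoid.inv_eq_inv, Groupoid.inv_eq_inv, IsIso.inv_comp_eq, ← Category.assoc,
    IsIso.eq_comp_inv, h]

theorem thin_factorization_unique_general (C : Type) [Groupoid.{0} C]
    (Pos Neg : ∀ {x y : C}, (x ⟶ y) → Prop)
    (hPosComp : ∀ {x y z : C} (f : x ⟶ y) (g : y ⟶ z),
      Pos f → Pos g → Pos (f ≫ g))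
    (hNegComp : ∀ {x y z : C} (f : x ⟶ y) (g : y ⟶ z),
      Neg f → Neg g → Neg (f ≫ g))
    (hPosInv : ∀ {x y : C} (f : x ⟶ y), Pos f → Pos (Groupoid.inv f))
    (hNegInv : ∀ {x y : C} (f : x ⟶ y), Neg f → Neg (Groupoid.inv f))
    (hPN : ∀ {x y : C} (f : x ⟶ y), Pos f → Neg f → ∃ h : x = y,
      f = eqToHom h)
    (x y y' z : C) (θm : x ⟶ y) (θp : y ⟶ z) (φm : x ⟶ y') (φp : y' ⟶ z)
    (hθm : Neg θm) (hθp : Pos θp) (hφm : Neg φm) (hφp : Pos φp)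
    (heq : θm ≫ θp = φm ≫ φp) :
    ∃ h : y = y', θm ≫ eqToHom h = φm ∧ eqToHom h ≫ φp = θp := by
  -- The comparison symmetry `φ⁻ ∘ θ⁻⁻¹ = φ⁺⁻¹ ∘ θ⁺` is both negative and positive, hence an identity.
  have hcomm := Groupoid.inv_comp_eq_comp_inv_of_comp_eq heq
  have hneg : Neg (Groupoid.inv θm ≫ φm) := hNegComp _ _ (hNegInv _ hθm) hφm
  have hpos : Pos (Groupoid.inv θm ≫ φm) := hcomm ▸ hPosComp _ _ hθp (hPosInv _ hφp)
  obtain ⟨h, hid⟩ := hPN _ hpos hneg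
  refine ⟨h, ?_, ?_⟩
  · rw [← hid, ← Category.assoc, Groupoid.comp_inv, Category.id_comp]
  · rw [← hid, hcomm, Category.assoc, Groupoid.inv_comp, Category.comp_id]

/-- Uniqueness of the polarized factorization of symmetries in a thin
concurrent game. Abstractly: in the groupoid of symmetries of a thin
concurrent game, with `Pos` and `Neg` the positive and negative sub-families
(each closed under identities, composition and inverses, as isomorphism
families), assuming that a symmetry which is both positive and negative is an
identity, any two factorizations `θ = θ⁺ ∘ θ⁻ = φ⁺ ∘ φ⁻` with negative parts
`θ⁻, φ⁻` and positive parts `θ⁺, φ⁺` agree (up to the induced equality of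
middle objects). -/
theorem thin_factorization_unique (C : Type) [Groupoid.{0} C]
    (Pos Neg : ∀ {x y : C}, (x ⟶ y) → Prop)
    (hPosId : ∀ x : C, Pos (𝟙 x)) (hNegId : ∀ x : C, Neg (𝟙 x))
    (hPosComp : ∀ {x y z : C} (f : x ⟶ y) (g : y ⟶ z),
      Pos f → Pos g → Pos (f ≫ g))
    (hNegComp : ∀ {x y z : C} (f : x ⟶ y) (g : y ⟶ z),
      Neg f → Neg g → Neg (f ≫ g))
    (hPosInv : ∀ {x y : C} (f : x ⟶ y), Pos f → Pos (Groupoid.inv f))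
    (hNegInv : ∀ {x y : C} (f : x ⟶ y), Neg f → Neg (Groupoid.inv f))
    (hPN : ∀ {x y : C} (f : x ⟶ y), Pos f → Neg f → ∃ h : x = y,
      f = eqToHom h)
    (x y y' z : C) (θm : x ⟶ y) (θp : y ⟶ z) (φm : x ⟶ y') (φp : y' ⟶ z)
    (hθm : Neg θm) (hθp : Pos θp) (hφm : Neg φm) (hφp : Pos φp)
    (heq : θm ≫ θp = φm ≫ φp) :
    ∃ h : y = y', θm ≫ eqToHom h = φm ∧ eqToHom h ≫ φp = θp :=
  thin_factorization_unique_general C Pos Neg hPosComp hNegComp hPosInv hNegInv hPN x y y' z θm θp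
    φm φp hθm hθp hφm hφp heq
end
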